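/- arXiv:1311.3726 — 3 statements merged into one kernel-verified Lean document; each statement's English description precedes it below -/
import Mathlib

section
/- Suppose m = 1 and that for each i = 1,…,n, (g₁)_{d,i} = 0 implies f_{d,i} > 0. Let c > 0 satisfy, for each i = 1,…,n: if (g₁)_{d,i} < 0 then c ≥ −f_{d,i}/(g₁)_{d,i}, and if (g₁)_{d,i} > 0 then c > −f_{d,i}/(g₁)_{d,i}. Let A := the 2×2 matrix with rows (1, 0) and (−c, 1), indexed by j, k ∈ {0, 1} (so h₀ = −(f + c·g₁) and h₁ = g₁). If, in addition, Δ(−g₁) = ∅ and g₁(0) ≥ 0, then f^A_{gp,g} = s(f,g) (as elements of ℝ ∪ {±∞}). -/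
/-!
With `A = [[1, 0], [−c, 1]]` one has `h₀ = −(f + c g₁)`, `h₁ = g₁` and `H(μ) = G(μ − c)`, and the
last constraint of (lw2) says `μ − c ≥ 0`; so `λ = μ − c` matches the multipliers on both sides,
and since `g₁(0) ≥ 0` the constant terms `−h₀(0) − μ g₁(0)⁺` and `G(λ)(0)` agree.
As `Ω(−g₁) = Δ(−g₁) = ∅`, the only monomials of `g₁` are `1` and the `xᵢ^d`; hence `G(λ)` has the
coefficients of `f` on `Δ = Δ(f) = Δ(G(λ))`, and `max (H(μ)_α⁺, H(μ)_α⁻) = |f_α|`.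
It remains to compare (lw) for `G(λ)` with (lw2) for `μ = λ + c`. A feasible `z` of (lw) is feasible
for (lw2) with `w_α = |f_α|`, with the same value because `d` is even. Conversely, lowering `w_α` to
`|f_α|` only decreases `t`, and each inequality `∏ (z_{α,i}/α_i)^{α_i} ≥ (w_α/d)^d`, `|α| = d`,
becomes an equality after shrinking `z_α` by a factor in `(0, 1]`: this keeps the budget constraints
and does not change the objective, which only involves the `α` with `|α| < d`.
-/


open MvPolynomial Finset

noncomputable section

/-- `Finset.filter` with classical decidability. -/
def pfilter {β : Type*} (s : Finset β) (q : β → Prop) : Finset β :=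
  @Finset.filter β q (fun _ => Classical.propDecidable _) s

/-- `|α| := α₁ + ⋯ + αₙ` for a multi-index `α`. -/
def adeg {n : ℕ} (α : Fin n →₀ ℕ) : ℕ := ∑ i, α i

/-- `Ω(p) := {α : |α| ≤ d, p_α ≠ 0, α ∉ {0, ε₁, …, εₙ}}`. -/
def OmegaSet {n : ℕ} (d : ℕ) (p : MvPolynomial (Fin n) ℝ) : Finset (Fin n →₀ ℕ) :=
  pfilter p.support (fun α => adeg α ≤ d ∧ α ≠ 0 ∧ ∀ i, α ≠ Finsupp.single i d)

/-- `Δ(p) := {α ∈ Ω(p) : p_α x^α is not a square}`. -/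
def DelSet {n : ℕ} (d : ℕ) (p : MvPolynomial (Fin n) ℝ) : Finset (Fin n →₀ ℕ) :=
  pfilter (OmegaSet d p)
    (fun α => ¬ IsSquare ((monomial α (p.coeff α)) : MvPolynomial (Fin n) ℝ))

/-- Feasibility for program (lw) for `p`. -/
def LwFeas {n : ℕ} (d : ℕ) (p : MvPolynomial (Fin n) ℝ)
    (z : (Fin n →₀ ℕ) → Fin n → ℝ) : Prop :=
  (∀ α ∈ DelSet d p, ∀ i, 0 ≤ z α i ∧ (z α i = 0 ↔ α i = 0)) ∧
  (∀ i, ∑ α ∈ DelSet d p, z α i ≤ p.coeff (Finsupp.single i d)) ∧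
  (∀ α ∈ DelSet d p, adeg α = d →
    ∏ i, (z α i / (α i : ℝ)) ^ (α i) = (p.coeff α / (d : ℝ)) ^ d)

/-- The objective function `v` of program (lw). -/
def lwObj {n : ℕ} (d : ℕ) (p : MvPolynomial (Fin n) ℝ)
    (z : (Fin n →₀ ℕ) → Fin n → ℝ) : ℝ :=
  ∑ α ∈ pfilter (DelSet d p) (fun α => adeg α < d),
    ((d : ℝ) - (adeg α : ℝ)) *
      (((p.coeff α / (d : ℝ)) ^ d * ∏ i, ((α i : ℝ) / z α i) ^ (α i)) ^
        ((1 : ℝ) / ((d : ℝ) - (adeg α : ℝ))))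

/-- `ρ(p) ∈ [0,∞]`, the infimum of `v` over the feasible set (`⊤` if infeasible). -/
def lwRho {n : ℕ} (d : ℕ) (p : MvPolynomial (Fin n) ℝ) : EReal :=
  sInf ((fun z => ((lwObj d p z : ℝ) : EReal)) '' {z | LwFeas d p z})

/-- `p_gp := p(0) − ρ(p) ∈ ℝ ∪ {−∞}`. -/
def lwGp {n : ℕ} (d : ℕ) (p : MvPolynomial (Fin n) ℝ) : EReal :=
  ((eval (0 : Fin n → ℝ) p : ℝ) : EReal) - lwRho d p

/-- `G(λ) := f − ∑ⱼ λⱼ gⱼ`. -/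
def polyG {n m : ℕ} (f : MvPolynomial (Fin n) ℝ) (g : Fin m → MvPolynomial (Fin n) ℝ)
    (lam : Fin m → ℝ) : MvPolynomial (Fin n) ℝ :=
  f - ∑ j, C (lam j) * g j

/-- `s(f,g) := sup{G(λ)_gp : λ ∈ [0,∞)^m}`. -/
def sBound {n m : ℕ} (d : ℕ) (f : MvPolynomial (Fin n) ℝ)
    (g : Fin m → MvPolynomial (Fin n) ℝ) : EReal :=
  sSup ((fun lam => lwGp d (polyG f g lam)) '' {lam : Fin m → ℝ | ∀ j, 0 ≤ lam j})


/-- `h_k := ∑_{j=0}^m a_{jk} g_j` for `gext = (g₀, g₁, …, g_m)` with `g₀ = −f`. -/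
def hpoly {n m : ℕ} (gext : Fin (m+1) → MvPolynomial (Fin n) ℝ)
    (A : Fin (m+1) → Fin (m+1) → ℝ) (k : Fin (m+1)) : MvPolynomial (Fin n) ℝ :=
  ∑ j, C (A j k) * gext j

/-- `μ` extended by `μ₀ := 1`. -/
def muExt {m : ℕ} (mu : Fin m → ℝ) : Fin (m+1) → ℝ := Fin.cons 1 mu

/-- `H(μ) := −∑_{k=0}^m μ_k h_k`. -/
def Hpoly {n m : ℕ} (gext : Fin (m+1) → MvPolynomial (Fin n) ℝ)
    (A : Fin (m+1) → Fin (m+1) → ℝ) (mu : Fin m → ℝ) : MvPolynomial (Fin n) ℝ :=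
  - ∑ k, C (muExt mu k) * hpoly gext A k

/-- `H(μ)_α^+ := −∑_{j : (h_j)_α < 0} (h_j)_α μ_j`. -/
def Hplus {n m : ℕ} (gext : Fin (m+1) → MvPolynomial (Fin n) ℝ)
    (A : Fin (m+1) → Fin (m+1) → ℝ) (mu : Fin m → ℝ) (α : Fin n →₀ ℕ) : ℝ :=
  ∑ j, if (hpoly gext A j).coeff α < 0 then -((hpoly gext A j).coeff α * muExt mu j) else 0

/-- `H(μ)_α^− := ∑_{j : (h_j)_α > 0} (h_j)_α μ_j`. -/
def Hminus {n m : ℕ} (gext : Fin (m+1) → MvPolynomial (Fin n) ℝ)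
    (A : Fin (m+1) → Fin (m+1) → ℝ) (mu : Fin m → ℝ) (α : Fin n →₀ ℕ) : ℝ :=
  ∑ j, if 0 < (hpoly gext A j).coeff α then (hpoly gext A j).coeff α * muExt mu j else 0

/-- `Δ := Δ(f) ∪ Δ(−g₁) ∪ ⋯ ∪ Δ(−g_m)` (note `−g₀ = f`). -/
def DelTot2 {n m : ℕ} (d : ℕ) (gext : Fin (m+1) → MvPolynomial (Fin n) ℝ) :
    Finset (Fin n →₀ ℕ) :=
  Finset.univ.biUnion (fun j : Fin (m+1) => DelSet d (-(gext j)))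

/-- Feasibility for program (lw2). -/
def Lw2Feas {n m : ℕ} (d : ℕ) (gext : Fin (m+1) → MvPolynomial (Fin n) ℝ)
    (A : Fin (m+1) → Fin (m+1) → ℝ)
    (z : (Fin n →₀ ℕ) → Fin n → ℝ) (w : (Fin n →₀ ℕ) → ℝ) (mu : Fin m → ℝ) : Prop :=
  (∀ j, 0 < mu j) ∧
  (∀ α ∈ DelTot2 d gext, ∀ i, 0 ≤ z α i ∧ (z α i = 0 ↔ α i = 0)) ∧
  (∀ α ∈ DelTot2 d gext, 0 < w α) ∧
  (∀ i, ∑ α ∈ DelTot2 d gext, z α i ≤ (Hpoly gext A mu).coeff (Finsupp.single i d)) ∧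
  (∀ α ∈ DelTot2 d gext, adeg α = d →
    (w α / (d : ℝ)) ^ d ≤ ∏ i, (z α i / (α i : ℝ)) ^ (α i)) ∧
  (∀ α ∈ DelTot2 d gext, max (Hplus gext A mu α) (Hminus gext A mu α) ≤ w α) ∧
  (∀ j : Fin (m+1), j ≠ 0 → 0 ≤ ∑ k, A j k * muExt mu k)

/-- The objective function `t` of program (lw2). -/
def lw2Obj {n m : ℕ} (d : ℕ) (gext : Fin (m+1) → MvPolynomial (Fin n) ℝ)
    (A : Fin (m+1) → Fin (m+1) → ℝ)
    (z : (Fin n →₀ ℕ) → Fin n → ℝ) (w : (Fin n →₀ ℕ) → ℝ) (mu : Fin m → ℝ) : ℝ :=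
  (∑ j : Fin m, mu j * max (eval (0 : Fin n → ℝ) (hpoly gext A j.succ)) 0) +
  ∑ α ∈ pfilter (DelTot2 d gext) (fun α => adeg α < d),
    ((d : ℝ) - (adeg α : ℝ)) *
      (((w α / (d : ℝ)) ^ d * ∏ i, ((α i : ℝ) / z α i) ^ (α i)) ^
        ((1 : ℝ) / ((d : ℝ) - (adeg α : ℝ))))

/-- `ρ_A ∈ [0,∞]`, the optimal value of program (lw2) (`⊤` if infeasible). -/
def rhoA {n m : ℕ} (d : ℕ) (gext : Fin (m+1) → MvPolynomial (Fin n) ℝ)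
    (A : Fin (m+1) → Fin (m+1) → ℝ) : EReal :=
  sInf ((fun t : ((Fin n →₀ ℕ) → Fin n → ℝ) × ((Fin n →₀ ℕ) → ℝ) × (Fin m → ℝ) =>
      ((lw2Obj d gext A t.1 t.2.1 t.2.2 : ℝ) : EReal)) ''
    {t | Lw2Feas d gext A t.1 t.2.1 t.2.2})

/-- `f^A_{gp,g} := −h₀(0) − ρ_A ∈ ℝ ∪ {−∞}`. -/
def fAgp {n m : ℕ} (d : ℕ) (gext : Fin (m+1) → MvPolynomial (Fin n) ℝ)
    (A : Fin (m+1) → Fin (m+1) → ℝ) : EReal :=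
  ((-(eval (0 : Fin n → ℝ) (hpoly gext A 0)) : ℝ) : EReal) - rhoA d gext A

theorem EReal.coe_sub_sInf_image {β : Type*} (a : ℝ) (F : β → ℝ) (S : Set β) :
    (a : EReal) - sInf ((fun b => (F b : EReal)) '' S) =
      sSup ((fun b => ((a - F b : ℝ) : EReal)) '' S) := by
  rcases S.eq_empty_or_nonempty with rfl | ⟨b₀, hb₀⟩
  · simp
  refine le_antisymm ?_ (sSup_le ?_)
  · rw [le_sSup_iff]
    intro u hu
    induction u with
    | bot => exact absurd (le_bot_iff.1 (hu ⟨b₀, hb₀, rfl⟩)) (EReal.coe_ne_bot _)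
    | top => exact le_top
    | coe r =>
      have hinf : ((a - r : ℝ) : EReal) ≤ sInf ((fun b => (F b : EReal)) '' S) := by
        refine le_sInf ?_
        rintro _ ⟨b, hb, rfl⟩
        have := EReal.coe_le_coe_iff.1 (hu ⟨b, hb, rfl⟩)
        exact EReal.coe_le_coe_iff.2 (by linarith)
      calc (a : EReal) - sInf ((fun b => (F b : EReal)) '' S)
          ≤ (a : EReal) - ((a - r : ℝ) : EReal) := EReal.sub_le_sub le_rfl hinf
        _ = r := by rw [← EReal.coe_sub, sub_sub_cancel]
  · rintro _ ⟨b, hb, rfl⟩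
    simp only [EReal.coe_sub]
    exact EReal.sub_le_sub le_rfl (sInf_le ⟨b, hb, rfl⟩)

theorem lwGp_eq_sSup {n : ℕ} (d : ℕ) (p : MvPolynomial (Fin n) ℝ) :
    lwGp d p = sSup ((fun z => ((eval 0 p - lwObj d p z : ℝ) : EReal)) '' {z | LwFeas d p z}) :=
  EReal.coe_sub_sInf_image _ _ _

theorem fAgp_eq_sSup {n m : ℕ} (d : ℕ) (gext : Fin (m+1) → MvPolynomial (Fin n) ℝ)
    (A : Fin (m+1) → Fin (m+1) → ℝ) :
    fAgp d gext A =
      sSup ((fun t : ((Fin n →₀ ℕ) → Fin n → ℝ) × ((Fin n →₀ ℕ) → ℝ) × (Fin m → ℝ) =>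
        ((-eval 0 (hpoly gext A 0) - lw2Obj d gext A t.1 t.2.1 t.2.2 : ℝ) : EReal)) ''
          {t | Lw2Feas d gext A t.1 t.2.1 t.2.2}) :=
  EReal.coe_sub_sInf_image _ _ _

theorem mem_pfilter {β : Type*} {s : Finset β} {q : β → Prop} {a : β} :
    a ∈ pfilter s q ↔ a ∈ s ∧ q a :=
  @Finset.mem_filter _ _ (fun _ => Classical.propDecidable _) _ _

theorem Even.div_pow_le_div_pow {d : ℕ} (hd : Even d) {x y : ℝ} (h : |x| ≤ y) (a : ℝ) :
    (x / a) ^ d ≤ (y / a) ^ d := by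
  rw [← hd.pow_abs (x / a), ← hd.pow_abs (y / a), abs_div, abs_div]
  gcongr ?_ ^ d
  exact div_le_div_of_nonneg_right (h.trans (le_abs_self y)) (abs_nonneg a)

section Monomials

variable {n d : ℕ}

theorem mem_delSet {p : MvPolynomial (Fin n) ℝ} {α : Fin n →₀ ℕ} :
    α ∈ DelSet d p ↔ (p.coeff α ≠ 0 ∧ adeg α ≤ d ∧ α ≠ 0 ∧ ∀ i, α ≠ Finsupp.single i d) ∧
      ¬IsSquare (monomial α (p.coeff α)) := by
  rw [DelSet, OmegaSet, mem_pfilter, mem_pfilter, mem_support_iff]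

theorem adeg_eq_zero {α : Fin n →₀ ℕ} : adeg α = 0 ↔ α = 0 := by
  simp [adeg, Finsupp.ext_iff]

theorem adeg_le_totalDegree {p : MvPolynomial (Fin n) ℝ} {α : Fin n →₀ ℕ}
    (h : α ∈ p.support) : adeg α ≤ p.totalDegree :=
  (Finsupp.sum_fintype α (fun _ e => e) fun _ => rfl).symm.trans_le (le_totalDegree h)

def VertexSupported (d : ℕ) (p : MvPolynomial (Fin n) ℝ) : Prop :=
  ∀ α, α ≠ 0 → (∀ i, α ≠ Finsupp.single i d) → p.coeff α = 0

theorem VertexSupported.of_omegaSet_eq_empty {p : MvPolynomial (Fin n) ℝ}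
    (hp : p.totalDegree ≤ d) (hΩ : OmegaSet d p = ∅) : VertexSupported d p := by
  intro α h0 hv
  by_contra hα
  have hmem : α ∈ OmegaSet d p := by
    have hsupp := mem_support_iff.2 hα
    exact mem_pfilter.2 ⟨hsupp, (adeg_le_totalDegree hsupp).trans hp, h0, hv⟩
  simp [hΩ] at hmem

theorem VertexSupported.of_neg {p : MvPolynomial (Fin n) ℝ} (h : VertexSupported d (-p)) :
    VertexSupported d p := fun α h0 hv => by simpa using h α h0 hv

theorem delSet_congr {p q : MvPolynomial (Fin n) ℝ}
    (h : ∀ α, α ≠ 0 → (∀ i, α ≠ Finsupp.single i d) → p.coeff α = q.coeff α) :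
    DelSet d p = DelSet d q := by
  ext α
  simp only [mem_delSet]
  constructor <;> rintro ⟨⟨hne, hle, h0, hv⟩, hsq⟩ <;> simp_all

end Monomials

section Relaxation

variable {n d : ℕ}

/-- The objective `v` of (lw) with the coefficients `p_α` replaced by weights `w_α`, as in `t`. -/
def lwSum (d : ℕ) (D : Finset (Fin n →₀ ℕ)) (z : (Fin n →₀ ℕ) → Fin n → ℝ)
    (w : (Fin n →₀ ℕ) → ℝ) : ℝ :=
  ∑ α ∈ pfilter D (fun α => adeg α < d),
    ((d : ℝ) - (adeg α : ℝ)) *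
      (((w α / (d : ℝ)) ^ d * ∏ i, ((α i : ℝ) / z α i) ^ (α i)) ^
        ((1 : ℝ) / ((d : ℝ) - (adeg α : ℝ))))

theorem lwObj_eq_lwSum (p : MvPolynomial (Fin n) ℝ) (z : (Fin n →₀ ℕ) → Fin n → ℝ) :
    lwObj d p z = lwSum d (DelSet d p) z p.coeff := rfl

theorem lwSum_abs (hd : Even d) (D : Finset (Fin n →₀ ℕ)) (z : (Fin n →₀ ℕ) → Fin n → ℝ)
    (w : (Fin n →₀ ℕ) → ℝ) : lwSum d D z (fun α => |w α|) = lwSum d D z w := by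
  simp only [lwSum, div_pow, hd.pow_abs]

theorem lwSum_le_lwSum (hd : Even d) {D : Finset (Fin n →₀ ℕ)} {z : (Fin n →₀ ℕ) → Fin n → ℝ}
    {w w' : (Fin n →₀ ℕ) → ℝ} (hz : ∀ α ∈ D, ∀ i, 0 ≤ z α i) (hw : ∀ α ∈ D, |w α| ≤ w' α) :
    lwSum d D z w ≤ lwSum d D z w' := by
  refine Finset.sum_le_sum fun α hα => ?_
  obtain ⟨hαD, hαd⟩ := mem_pfilter.1 hα
  have hprod : 0 ≤ ∏ i, ((α i : ℝ) / z α i) ^ (α i) :=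
    Finset.prod_nonneg fun i _ => pow_nonneg (div_nonneg (Nat.cast_nonneg _) (hz α hαD i)) _
  have hdeg : (adeg α : ℝ) < d := by exact_mod_cast hαd
  refine mul_le_mul_of_nonneg_left ?_ (by linarith)
  refine Real.rpow_le_rpow (mul_nonneg (hd.pow_nonneg _) hprod) ?_ (by positivity)
  gcongr ?_ * _
  exact hd.div_pow_le_div_pow (hw α hαD) _

theorem prod_mul_div_pow (α : Fin n →₀ ℕ) (x : Fin n → ℝ) (s : ℝ) :
    ∏ i, (s * x i / (α i : ℝ)) ^ (α i) = s ^ adeg α * ∏ i, (x i / (α i : ℝ)) ^ (α i) := by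
  rw [adeg, ← Finset.prod_pow_eq_pow_sum, ← Finset.prod_mul_distrib]
  exact Finset.prod_congr rfl fun i _ => by rw [mul_div_assoc, mul_pow]

theorem prod_div_pow_pos {α : Fin n →₀ ℕ} {x : Fin n → ℝ}
    (hx : ∀ i, 0 ≤ x i ∧ (x i = 0 ↔ α i = 0)) : 0 < ∏ i, (x i / (α i : ℝ)) ^ (α i) := by
  refine Finset.prod_pos fun i _ => ?_
  rcases eq_or_ne (α i) 0 with h | h
  · simp [h]
  · have hxi : 0 < x i := (hx i).1.lt_of_ne' fun h' => h ((hx i).2.1 h')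
    positivity

theorem exists_scale_prod_div_pow_eq {α : Fin n →₀ ℕ} {x : Fin n → ℝ} {T : ℝ} (hα : α ≠ 0)
    (hx : ∀ i, 0 ≤ x i ∧ (x i = 0 ↔ α i = 0)) (hT : 0 < T)
    (hTP : T ≤ ∏ i, (x i / (α i : ℝ)) ^ (α i)) :
    ∃ s : ℝ, 0 < s ∧ s ≤ 1 ∧ ∏ i, (s * x i / (α i : ℝ)) ^ (α i) = T := by
  set P := ∏ i, (x i / (α i : ℝ)) ^ (α i)
  have hP : 0 < P := prod_div_pow_pos hx
  have hk : adeg α ≠ 0 := mt adeg_eq_zero.1 hα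
  refine ⟨(T / P) ^ ((adeg α : ℝ)⁻¹), by positivity,
    Real.rpow_le_one (by positivity) ((div_le_one hP).2 hTP) (by positivity), ?_⟩
  rw [prod_mul_div_pow, Real.rpow_inv_natCast_pow (by positivity) hk, div_mul_cancel₀ _ hP.ne']

theorem exists_lwFeas_lwObj_le_lwSum (hd : Even d) {p : MvPolynomial (Fin n) ℝ}
    {z : (Fin n →₀ ℕ) → Fin n → ℝ} {w : (Fin n →₀ ℕ) → ℝ}
    (hz : ∀ α ∈ DelSet d p, ∀ i, 0 ≤ z α i ∧ (z α i = 0 ↔ α i = 0))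
    (hbudget : ∀ i, ∑ α ∈ DelSet d p, z α i ≤ p.coeff (Finsupp.single i d))
    (hprod : ∀ α ∈ DelSet d p, adeg α = d →
      (w α / (d : ℝ)) ^ d ≤ ∏ i, (z α i / (α i : ℝ)) ^ (α i))
    (hw : ∀ α ∈ DelSet d p, |p.coeff α| ≤ w α) :
    ∃ z', LwFeas d p z' ∧ lwObj d p z' ≤ lwSum d (DelSet d p) z w := by
  have hscale : ∀ α, ∃ s : ℝ, 0 < s ∧ s ≤ 1 ∧ (α ∈ DelSet d p → adeg α = d →
      ∏ i, (s * z α i / (α i : ℝ)) ^ (α i) = (p.coeff α / (d : ℝ)) ^ d) := by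
    intro α
    by_cases h : α ∈ DelSet d p ∧ adeg α = d
    · obtain ⟨⟨hne, -, h0, -⟩, -⟩ := mem_delSet.1 h.1
      have hd0 : (d : ℝ) ≠ 0 := by exact_mod_cast h.2 ▸ mt adeg_eq_zero.1 h0
      obtain ⟨s, hs0, hs1, hs⟩ := exists_scale_prod_div_pow_eq h0 (hz α h.1)
        (hd.pow_pos (div_ne_zero hne hd0))
        ((hd.div_pow_le_div_pow (hw α h.1) _).trans (hprod α h.1 h.2))
      exact ⟨s, hs0, hs1, fun _ _ => hs⟩
    · exact ⟨1, one_pos, le_rfl, fun h₁ h₂ => absurd ⟨h₁, h₂⟩ h⟩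
  choose s hs0 hs1 hs using hscale
  set t : (Fin n →₀ ℕ) → ℝ := fun α => if adeg α = d then s α else 1
  have ht0 : ∀ α, 0 < t α := fun α => by dsimp only [t]; split_ifs <;> simp [hs0]
  have ht1 : ∀ α, t α ≤ 1 := fun α => by dsimp only [t]; split_ifs <;> simp [hs1]
  refine ⟨fun α i => t α * z α i, ⟨fun α hα i => ?_, fun i => ?_, fun α hα hαd => ?_⟩, ?_⟩
  · have := hz α hα i
    exact ⟨mul_nonneg (ht0 α).le this.1, by simp [(ht0 α).ne', this.2]⟩
  · refine le_trans (Finset.sum_le_sum fun α hα => ?_) (hbudget i)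
    exact mul_le_of_le_one_left (hz α hα i).1 (ht1 α)
  · simpa [t, hαd] using hs α hα hαd
  · rw [lwObj_eq_lwSum]
    refine le_of_eq_of_le (Finset.sum_congr rfl fun α hα => ?_)
      (lwSum_le_lwSum hd (fun α hα i => (hz α hα i).1) hw)
    have : t α = 1 := if_neg (mem_pfilter.1 hα).2.ne
    simp [this]

end Relaxation

section ShearMatrix

variable {n d : ℕ} {f g : MvPolynomial (Fin n) ℝ} {c : ℝ}

theorem hpoly_shear_zero : hpoly ![-f, g] ![![1, 0], ![-c, 1]] 0 = -(f + C c * g) := by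
  simp [hpoly, Fin.sum_univ_two]; ring

theorem hpoly_shear_one : hpoly ![-f, g] ![![1, 0], ![-c, 1]] 1 = g := by
  simp [hpoly, Fin.sum_univ_two]

theorem Hpoly_shear (mu : Fin 1 → ℝ) :
    Hpoly ![-f, g] ![![1, 0], ![-c, 1]] mu = f - C (mu 0 - c) * g := by
  simp [Hpoly, Fin.sum_univ_two, muExt, hpoly_shear_zero, hpoly_shear_one]; ring

theorem polyG_singleton (lam : Fin 1 → ℝ) : polyG f ![g] lam = f - C (lam 0) * g := by
  simp [polyG]

theorem sum_shear_one_mul_muExt (mu : Fin 1 → ℝ) :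
    ∑ k, ![![1, 0], ![-c, 1]] 1 k * muExt mu k = mu 0 - c := by
  simp [Fin.sum_univ_two, muExt]; ring

theorem lw2Obj_shear (z : (Fin n →₀ ℕ) → Fin n → ℝ) (w : (Fin n →₀ ℕ) → ℝ) (mu : Fin 1 → ℝ) :
    lw2Obj d ![-f, g] ![![1, 0], ![-c, 1]] z w mu =
      mu 0 * max (eval 0 g) 0 + lwSum d (DelTot2 d ![-f, g]) z w := by
  simp [lw2Obj, lwSum, hpoly_shear_one]

theorem max_Hplus_Hminus_shear {mu : Fin 1 → ℝ} {α : Fin n →₀ ℕ} (hg : g.coeff α = 0) :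
    max (Hplus ![-f, g] ![![1, 0], ![-c, 1]] mu α) (Hminus ![-f, g] ![![1, 0], ![-c, 1]] mu α)
      = |f.coeff α| := by
  simp [Hplus, Hminus, Fin.sum_univ_succ, hpoly_shear_zero, hpoly_shear_one, hg, muExt]
  split_ifs <;> grind

theorem delTot2_shear (hg : DelSet d (-g) = ∅) : DelTot2 d ![-f, g] = DelSet d f := by
  simp [DelTot2, Fin.univ_succ, hg]

theorem VertexSupported.coeff_sub_C_mul (hg : VertexSupported d g) (a : ℝ) {α : Fin n →₀ ℕ}
    (h0 : α ≠ 0) (hv : ∀ i, α ≠ Finsupp.single i d) : (f - C a * g).coeff α = f.coeff α := by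
  simp [hg α h0 hv]

theorem VertexSupported.delSet_sub_C_mul (hg : VertexSupported d g) (a : ℝ) :
    DelSet d (f - C a * g) = DelSet d f :=
  delSet_congr fun _ h0 hv => hg.coeff_sub_C_mul a h0 hv

theorem coe_sub_lw2Obj_le_sBound (hd : Even d) (hg : VertexSupported d g)
    (hΔg : DelSet d (-g) = ∅) (hg0 : 0 ≤ eval 0 g) {z : (Fin n →₀ ℕ) → Fin n → ℝ}
    {w : (Fin n →₀ ℕ) → ℝ} {mu : Fin 1 → ℝ}
    (hfeas : Lw2Feas d ![-f, g] ![![1, 0], ![-c, 1]] z w mu) :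
    ((-eval 0 (hpoly ![-f, g] ![![1, 0], ![-c, 1]] 0)
      - lw2Obj d ![-f, g] ![![1, 0], ![-c, 1]] z w mu : ℝ) : EReal) ≤ sBound d f ![g] := by
  obtain ⟨-, hz, -, hbudget, hprod, hw, hA⟩ := hfeas
  have hlam : 0 ≤ mu 0 - c := sum_shear_one_mul_muExt (c := c) mu ▸ hA 1 (by decide)
  set p := polyG f ![g] (fun _ => mu 0 - c)
  have hp : p = f - C (mu 0 - c) * g := polyG_singleton _
  have hΔ : DelTot2 d ![-f, g] = DelSet d p := by
    rw [delTot2_shear hΔg, hp, hg.delSet_sub_C_mul]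
  have hwp : ∀ α ∈ DelSet d p, |p.coeff α| ≤ w α := by
    intro α hα
    obtain ⟨⟨-, -, h0, hv⟩, -⟩ := mem_delSet.1 hα
    rw [hp, hg.coeff_sub_C_mul _ h0 hv, ← max_Hplus_Hminus_shear (c := c) (mu := mu) (hg α h0 hv)]
    exact hw α (hΔ ▸ hα)
  obtain ⟨z', hz', hobj⟩ := exists_lwFeas_lwObj_le_lwSum hd (hΔ ▸ hz)
    (by rw [← hΔ, hp, ← Hpoly_shear]; exact hbudget) (hΔ ▸ hprod) hwp
  have hp0 : eval 0 p = eval 0 f - (mu 0 - c) * eval 0 g := by simp [hp]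
  calc _ ≤ ((eval 0 p - lwObj d p z' : ℝ) : EReal) := by
        rw [EReal.coe_le_coe_iff, lw2Obj_shear, hΔ, hpoly_shear_zero, hp0, max_eq_left hg0]
        simp only [eval_neg, eval_add, eval_mul, eval_C]
        linarith
    _ ≤ lwGp d p := lwGp_eq_sSup d p ▸ le_sSup ⟨z', hz', rfl⟩
    _ ≤ sBound d f ![g] := le_sSup ⟨_, fun _ => hlam, rfl⟩

theorem coe_sub_lwObj_le_fAgp (hd : Even d) (hc : 0 < c) (hg : VertexSupported d g)
    (hΔg : DelSet d (-g) = ∅) (hg0 : 0 ≤ eval 0 g) {lam : Fin 1 → ℝ} (hlam : ∀ j, 0 ≤ lam j)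
    {z : (Fin n →₀ ℕ) → Fin n → ℝ} (hz : LwFeas d (polyG f ![g] lam) z) :
    ((eval 0 (polyG f ![g] lam) - lwObj d (polyG f ![g] lam) z : ℝ) : EReal)
      ≤ fAgp d ![-f, g] ![![1, 0], ![-c, 1]] := by
  obtain ⟨hzs, hbudget, hprod⟩ := hz
  set p := polyG f ![g] lam
  have hp : p = f - C (lam 0) * g := polyG_singleton lam
  have hΔ : DelTot2 d ![-f, g] = DelSet d p := by
    rw [delTot2_shear hΔg, hp, hg.delSet_sub_C_mul]
  set mu : Fin 1 → ℝ := fun _ => lam 0 + c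
  have hH : Hpoly ![-f, g] ![![1, 0], ![-c, 1]] mu = p := by
    rw [Hpoly_shear, hp, add_sub_cancel_right]
  have hfeas : Lw2Feas d ![-f, g] ![![1, 0], ![-c, 1]] z (fun α => |p.coeff α|) mu := by
    refine ⟨fun _ => by linarith [hlam 0], hΔ ▸ hzs,
      fun α hα => abs_pos.2 (mem_delSet.1 (hΔ ▸ hα)).1.1, by rwa [hΔ, hH],
      fun α hα hαd => ?_, fun α hα => ?_, fun j hj => ?_⟩
    · rw [div_pow, hd.pow_abs, ← div_pow, hprod α (hΔ ▸ hα) hαd]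
    · obtain ⟨⟨-, -, h0, hv⟩, -⟩ := mem_delSet.1 (hΔ ▸ hα)
      show _ ≤ |p.coeff α|
      rw [max_Hplus_Hminus_shear (hg α h0 hv), hp, hg.coeff_sub_C_mul _ h0 hv]
    · rw [Fin.eq_one_of_ne_zero j hj, sum_shear_one_mul_muExt]
      simpa [mu] using hlam 0
  have hobj : lw2Obj d ![-f, g] ![![1, 0], ![-c, 1]] z (fun α => |p.coeff α|) mu
      = mu 0 * eval 0 g + lwObj d p z := by
    rw [lw2Obj_shear, hΔ, lwSum_abs hd, lwObj_eq_lwSum, max_eq_left hg0]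
  have hp0 : eval 0 p = eval 0 f - lam 0 * eval 0 g := by simp [hp]
  rw [fAgp_eq_sSup]
  refine le_sSup ⟨(z, fun α => |p.coeff α|, mu), hfeas, ?_⟩
  show ((_ - lw2Obj d _ _ z _ mu : ℝ) : EReal) = _
  rw [hobj, hp0, hpoly_shear_zero]
  simp only [eval_neg, eval_add, eval_mul, eval_C, mu]
  congr 1
  ring

end ShearMatrix

theorem stmt9_general {n : ℕ} (d : ℕ)
    (f g₁ : MvPolynomial (Fin n) ℝ)
    (hde : Even d) (hdg : g₁.totalDegree ≤ d)
    (c : ℝ) (hc : 0 < c)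
    (gext : Fin 2 → MvPolynomial (Fin n) ℝ) (hgext : gext = ![-f, g₁])
    (hO : ∀ j, OmegaSet d (-(gext j)) = DelSet d (-(gext j)))
    (A : Fin 2 → Fin 2 → ℝ) (hA : A = ![![1, 0], ![-c, 1]])
    (hDelg : DelSet d (-g₁) = ∅) (hg0 : 0 ≤ eval (0 : Fin n → ℝ) g₁) :
    fAgp d gext A = sBound d f ![g₁] := by
  subst hgext hA
  have hg : VertexSupported d g₁ :=
    (VertexSupported.of_omegaSet_eq_empty (by rwa [totalDegree_neg]) ((hO 1).trans hDelg)).of_neg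
  refine le_antisymm ?_ (sSup_le ?_)
  · rw [fAgp_eq_sSup]
    refine sSup_le ?_
    rintro _ ⟨⟨z, w, mu⟩, hfeas, rfl⟩
    exact coe_sub_lw2Obj_le_sBound hde hg hDelg hg0 hfeas
  · rintro _ ⟨lam, hlam, rfl⟩
    show lwGp d _ ≤ _
    rw [lwGp_eq_sSup]
    refine sSup_le ?_
    rintro _ ⟨z, hz, rfl⟩
    exact coe_sub_lwObj_le_fAgp hde hc hg hDelg hg0 hlam hz

/-- Theorem (m = 1): with `A = [[1,0],[−c,1]]`, if `Δ(−g₁) = ∅`, `g₁(0) ≥ 0` and `c > 0`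
(chosen as specified from the coefficients of `f` and `g₁`), then `f^A_{gp,g} = s(f,g)`. -/
theorem stmt9 {n : ℕ} (hn : 1 ≤ n) (d : ℕ)
    (f g₁ : MvPolynomial (Fin n) ℝ)
    (hd2 : 2 ≤ d) (hde : Even d) (hdf : f.totalDegree ≤ d) (hdg : g₁.totalDegree ≤ d)
    (hdLeast : ∀ d' : ℕ, Even d' → 2 ≤ d' → f.totalDegree ≤ d' →
      g₁.totalDegree ≤ d' → d ≤ d')
    (hcoef : ∀ i : Fin n, g₁.coeff (Finsupp.single i d) = 0 →
      0 < f.coeff (Finsupp.single i d))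
    (c : ℝ) (hc : 0 < c)
    (hcneg : ∀ i : Fin n, g₁.coeff (Finsupp.single i d) < 0 →
      -(f.coeff (Finsupp.single i d)) / g₁.coeff (Finsupp.single i d) ≤ c)
    (hcpos : ∀ i : Fin n, 0 < g₁.coeff (Finsupp.single i d) →
      -(f.coeff (Finsupp.single i d)) / g₁.coeff (Finsupp.single i d) < c)
    (gext : Fin 2 → MvPolynomial (Fin n) ℝ) (hgext : gext = ![-f, g₁])
    (hO : ∀ j, OmegaSet d (-(gext j)) = DelSet d (-(gext j)))
    (A : Fin 2 → Fin 2 → ℝ) (hA : A = ![![1, 0], ![-c, 1]])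
    (hDelg : DelSet d (-g₁) = ∅) (hg0 : 0 ≤ eval (0 : Fin n → ℝ) g₁) :
    fAgp d gext A = sBound d f ![g₁] :=
  stmt9_general d f g₁ hde hdg c hc gext hgext hO A hA hDelg hg0
end
end

section
/- Let α ∈ ℕⁿ with α_i > 0 for every i = 1,…,n and |α| < d, and let c ∈ ℝ with c ≠ 0. Then for every z = (z₁,…,zₙ) ∈ (0,∞)ⁿ, ∑_{i=1}^n z_i + (d−|α|)·[(|c|/d)^d · ∏_{i=1}^n (α_i/z_i)^{α_i}]^{1/(d−|α|)} ≥ |c|, and equality holds at z_i = α_i·|c|/d for all i. In other words, the minimum value of this function on (0,∞)ⁿ is |c|, attained at z_i = α_i·|c|/d. -/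
/-!
With `r = |c|` and `D = d`: weighted AM-GM with weights `D - |α|` and `αᵢ` (summing to `D`) at the points
`Q = [(r/D)^D ∏ (αᵢ/zᵢ)^{αᵢ}]^{1/(D-|α|)}` and `zᵢ/αᵢ`: the weighted geometric mean is
`((r/D)^D)^{1/D} = r/D` since the `zᵢ` cancel, and the weighted arithmetic mean is
`(∑ zᵢ + (D-|α|) Q) / D`. At `zᵢ = αᵢ r / D` all points equal `r / D`.
-/

open Finset Real

variable {ι : Type*} [Fintype ι] {a : ι → ℝ} {D r : ℝ}

theorem le_sum_add_mul_rpow_prod_div_rpow (ha : ∀ i, 0 < a i) (hD : ∑ i, a i < D) (hr : 0 ≤ r)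
    {z : ι → ℝ} (hz : ∀ i, 0 < z i) :
    r ≤ ∑ i, z i + (D - ∑ i, a i) *
      ((r / D) ^ D * ∏ i, (a i / z i) ^ a i) ^ (1 / (D - ∑ i, a i)) := by
  set k := D - ∑ i, a i
  have hk : 0 < k := sub_pos.mpr hD
  have hD0 : 0 < D := (sum_nonneg fun i _ => (ha i).le).trans_lt hD
  set P := (r / D) ^ D * ∏ i, (a i / z i) ^ a i
  have hP : 0 ≤ P := mul_nonneg (by positivity)
    (prod_nonneg fun i _ => rpow_nonneg (div_pos (ha i) (hz i)).le _)
  set Q := P ^ (1 / k)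
  let w : Option ι → ℝ := fun o => o.elim k a
  let x : Option ι → ℝ := fun o => o.elim Q fun i => z i / a i
  have hw : ∑ o, w o = D := by simp [w, Fintype.sum_option, k]
  have hwx : ∑ o, w o * x o = k * Q + ∑ i, z i := by
    simp only [w, x, Fintype.sum_option, Option.elim]
    congr 1
    exact sum_congr rfl fun i _ => mul_div_cancel₀ _ (ha i).ne'
  have hxw : ∏ o, x o ^ w o = (r / D) ^ D := by
    have hQk : Q ^ k = P := by
      rw [← rpow_mul hP, one_div_mul_cancel hk.ne', rpow_one]
    have hcancel : ∀ i, (a i / z i) ^ a i * (z i / a i) ^ a i = 1 := fun i => by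
      rw [← mul_rpow (div_pos (ha i) (hz i)).le (div_pos (hz i) (ha i)).le,
        div_mul_div_cancel₀' (ha i).ne', div_self (hz i).ne', one_rpow]
    simp only [w, x, Fintype.prod_option, Option.elim, hQk, P]
    rw [mul_assoc, ← prod_mul_distrib, prod_congr rfl fun i _ => hcancel i, prod_const_one, mul_one]
  have amgm := geom_mean_le_arith_mean univ w x (fun o _ => by cases o <;> simp [w, hk.le, (ha _).le])
    (hw ▸ hD0) (fun o _ => by cases o <;> simp [x, Q, rpow_nonneg hP, (div_pos (hz _) (ha _)).le])
  rw [hxw, hw, hwx, ← rpow_mul (div_nonneg hr hD0.le), mul_inv_cancel₀ hD0.ne', rpow_one,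
    div_le_div_iff_of_pos_right hD0] at amgm
  linarith

theorem sum_add_mul_rpow_prod_div_rpow_eq (ha : ∀ i, 0 < a i) (hD : ∑ i, a i < D) (hr : 0 < r) :
    ∑ i, a i * r / D + (D - ∑ i, a i) *
      ((r / D) ^ D * ∏ i, (a i / (a i * r / D)) ^ a i) ^ (1 / (D - ∑ i, a i)) = r := by
  set k := D - ∑ i, a i
  have hk : 0 < k := sub_pos.mpr hD
  have hD0 : 0 < D := (sum_nonneg fun i _ => (ha i).le).trans_lt hD
  have hrD : 0 < r / D := div_pos hr hD0
  have hprod : ∏ i, (a i / (a i * r / D)) ^ a i = (r / D) ^ (-∑ i, a i) := by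
    rw [rpow_neg hrD.le, ← inv_rpow hrD.le, inv_div, rpow_sum_of_pos (div_pos hD0 hr)]
    exact prod_congr rfl fun i _ => by rw [mul_div_assoc, div_mul_cancel_left₀ (ha i).ne', inv_div]
  rw [hprod, ← rpow_add hrD, ← sub_eq_add_neg, ← rpow_mul hrD.le, mul_one_div_cancel hk.ne',
    rpow_one, ← sum_div, ← sum_mul]
  field_simp
  ring

theorem stmt17_general {n : ℕ} (d : ℕ)
    (α : Fin n → ℕ) (hα : ∀ i, 0 < α i) (hαd : ∑ i, α i < d)
    (c : ℝ) (hc : c ≠ 0) :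
    (∀ z : Fin n → ℝ, (∀ i, 0 < z i) →
      |c| ≤ ∑ i, z i + ((d : ℝ) - ((∑ i, α i : ℕ) : ℝ)) *
        (((|c| / (d : ℝ)) ^ d * ∏ i, ((α i : ℝ) / z i) ^ (α i)) ^
          ((1 : ℝ) / ((d : ℝ) - ((∑ i, α i : ℕ) : ℝ)))) ) ∧
    (∑ i, ((α i : ℝ) * |c| / (d : ℝ))) + ((d : ℝ) - ((∑ i, α i : ℕ) : ℝ)) *
        (((|c| / (d : ℝ)) ^ d *
            ∏ i, ((α i : ℝ) / ((α i : ℝ) * |c| / (d : ℝ))) ^ (α i)) ^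
          ((1 : ℝ) / ((d : ℝ) - ((∑ i, α i : ℕ) : ℝ)))) = |c| := by
  have hα' : ∀ i, (0 : ℝ) < α i := fun i => Nat.cast_pos.mpr (hα i)
  have hαd' : ∑ i, (α i : ℝ) < d := by exact_mod_cast hαd
  simp only [Nat.cast_sum, ← rpow_natCast]
  exact ⟨fun z hz => le_sum_add_mul_rpow_prod_div_rpow hα' hαd' (abs_nonneg c) hz,
    sum_add_mul_rpow_prod_div_rpow_eq hα' hαd' (abs_pos.mpr hc)⟩

/-- Lemma (1): for `α` with all `αᵢ > 0` and `|α| < d`, the minimum over `(0,∞)ⁿ` of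
`∑ zᵢ + (d−|α|)·[(|c|/d)^d ∏ (αᵢ/zᵢ)^{αᵢ}]^{1/(d−|α|)}` is `|c|`,
attained at `zᵢ = αᵢ|c|/d`. -/
theorem stmt17 {n : ℕ} (d : ℕ) (hd2 : 2 ≤ d) (hde : Even d)
    (α : Fin n → ℕ) (hα : ∀ i, 0 < α i) (hαd : ∑ i, α i < d)
    (c : ℝ) (hc : c ≠ 0) :
    (∀ z : Fin n → ℝ, (∀ i, 0 < z i) →
      |c| ≤ ∑ i, z i + ((d : ℝ) - ((∑ i, α i : ℕ) : ℝ)) *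
        (((|c| / (d : ℝ)) ^ d * ∏ i, ((α i : ℝ) / z i) ^ (α i)) ^
          ((1 : ℝ) / ((d : ℝ) - ((∑ i, α i : ℕ) : ℝ)))) ) ∧
    (∑ i, ((α i : ℝ) * |c| / (d : ℝ))) + ((d : ℝ) - ((∑ i, α i : ℕ) : ℝ)) *
        (((|c| / (d : ℝ)) ^ d *
            ∏ i, ((α i : ℝ) / ((α i : ℝ) * |c| / (d : ℝ))) ^ (α i)) ^
          ((1 : ℝ) / ((d : ℝ) - ((∑ i, α i : ℕ) : ℝ)))) = |c| :=
  stmt17_general d α hα hαd c hc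
end

section
/- Let α ∈ ℕⁿ with α_i > 0 for every i = 1,…,n and |α| = d, and let c ∈ ℝ with c ≠ 0. Then for every z = (z₁,…,zₙ) ∈ (0,∞)ⁿ satisfying the constraint (|c|/d)^d · ∏_{i=1}^n (α_i/z_i)^{α_i} = 1, one has ∑_{i=1}^n z_i ≥ |c|; moreover the point z_i = α_i·|c|/d (i = 1,…,n) satisfies the constraint and gives ∑_{i=1}^n z_i = |c|. In other words, the minimum value of ∑_i z_i subject to z ∈ (0,∞)ⁿ and (|c|/d)^d · ∏_i (α_i/z_i)^{α_i} = 1 is |c|, attained at z_i = α_i·|c|/d. -/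
/-!
Write `zᵢ = αᵢ tᵢ`. The constraint says `∏ tᵢ ^ αᵢ = (|c| / d) ^ d`, and AM-GM with the integer
weights `αᵢ` (which sum to `d`) bounds this product by `(∑ αᵢ tᵢ / d) ^ d = (∑ zᵢ / d) ^ d`.
Equality in AM-GM holds when all `tᵢ` agree, i.e. at `tᵢ = |c| / d`.
-/

namespace Real

variable {ι : Type*} (s : Finset ι)

theorem prod_pow_le_sum_mul_div_sum_pow (a : ι → ℕ) (t : ι → ℝ) (ht : ∀ i ∈ s, 0 ≤ t i) :
    ∏ i ∈ s, t i ^ a i ≤ ((∑ i ∈ s, a i * t i) / ∑ i ∈ s, a i) ^ ∑ i ∈ s, a i := by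
  rcases Nat.eq_zero_or_pos (∑ i ∈ s, a i) with hzero | hpos
  · have ha : ∀ i ∈ s, a i = 0 := Finset.sum_eq_zero_iff.mp hzero
    rw [hzero, pow_zero, Finset.prod_congr rfl fun i hi => by rw [ha i hi, pow_zero],
      Finset.prod_const_one]
  have hcast : ∑ i ∈ s, (a i : ℝ) = ((∑ i ∈ s, a i : ℕ) : ℝ) := by push_cast; rfl
  have hgm := geom_mean_le_arith_mean s (fun i => (a i : ℝ)) t (fun i _ => Nat.cast_nonneg _)
    (by rw [hcast]; exact_mod_cast hpos) ht
  simp only [rpow_natCast, hcast] at hgm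
  have hprod : 0 ≤ ∏ i ∈ s, t i ^ a i := Finset.prod_nonneg fun i hi => pow_nonneg (ht i hi) _
  calc ∏ i ∈ s, t i ^ a i
      = ((∏ i ∈ s, t i ^ a i) ^ ((∑ i ∈ s, a i : ℕ) : ℝ)⁻¹) ^ ∑ i ∈ s, a i :=
        (rpow_inv_natCast_pow hprod hpos.ne').symm
    _ ≤ _ := pow_le_pow_left₀ (rpow_nonneg hprod _) hgm _

variable {α : ι → ℕ} {d : ℕ}

theorem le_sum_of_div_pow_mul_prod_div_pow_eq_one (hαd : ∑ i ∈ s, α i = d) (hd : 0 < d)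
    {r : ℝ} (hr : 0 ≤ r) {z : ι → ℝ} (hz : ∀ i ∈ s, 0 ≤ z i)
    (h : (r / d) ^ d * ∏ i ∈ s, ((α i : ℝ) / z i) ^ α i = 1) :
    r ≤ ∑ i ∈ s, z i := by
  have hprod : ∏ i ∈ s, (z i / α i) ^ α i = (r / d) ^ d := by
    rw [Finset.prod_congr rfl fun i _ => by rw [← inv_div, inv_pow], Finset.prod_inv_distrib]
    exact (eq_inv_of_mul_eq_one_left h).symm
  have ht : ∀ i ∈ s, 0 ≤ z i / α i := fun i hi => div_nonneg (hz i hi) (Nat.cast_nonneg _)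
  have hweighted : ∑ i ∈ s, (α i : ℝ) * (z i / α i) ≤ ∑ i ∈ s, z i :=
    Finset.sum_le_sum fun i hi => by
      rcases eq_or_ne (α i : ℝ) 0 with h0 | h0
      · simpa [h0] using hz i hi
      · rw [mul_div_cancel₀ _ h0]
  have hd' : (0 : ℝ) < d := by exact_mod_cast hd
  have hpow : (r / d) ^ d ≤ ((∑ i ∈ s, z i) / d) ^ d :=
    calc (r / d) ^ d
        = ∏ i ∈ s, (z i / α i) ^ α i := hprod.symm
      _ ≤ ((∑ i ∈ s, (α i : ℝ) * (z i / α i)) / d) ^ d := by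
        simpa only [hαd] using prod_pow_le_sum_mul_div_sum_pow s α _ ht
      _ ≤ ((∑ i ∈ s, z i) / d) ^ d := by
        have := Finset.sum_nonneg fun i hi => mul_nonneg (Nat.cast_nonneg (α i)) (ht i hi)
        gcongr
  have hz_sum : 0 ≤ ∑ i ∈ s, z i := Finset.sum_nonneg hz
  have := (pow_le_pow_iff_left₀ (by positivity) (by positivity) hd.ne').mp hpow
  exact (div_le_div_iff_of_pos_right hd').mp this

theorem div_pow_mul_prod_div_proportional_pow_eq_one (hαd : ∑ i ∈ s, α i = d) {r : ℝ}
    (hr : r ≠ 0) :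
    (r / d) ^ d * ∏ i ∈ s, ((α i : ℝ) / (α i * r / d)) ^ α i = 1 := by
  have hfactor : ∀ i ∈ s, ((α i : ℝ) / (α i * r / d)) ^ α i = ((d : ℝ) / r) ^ α i := by
    intro i _
    rcases eq_or_ne (α i) 0 with h0 | h0
    · simp [h0]
    · rw [div_div_eq_mul_div, mul_div_mul_left _ _ (Nat.cast_ne_zero.mpr h0)]
  rw [Finset.prod_congr rfl hfactor, Finset.prod_pow_eq_pow_sum, hαd, ← mul_pow]
  rcases eq_or_ne d 0 with hd | hd
  · simp [hd]
  · rw [div_mul_div_cancel₀ (Nat.cast_ne_zero.mpr hd), div_self hr, one_pow]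

theorem sum_proportional_eq (hαd : ∑ i ∈ s, α i = d) (hd : d ≠ 0) (r : ℝ) :
    ∑ i ∈ s, (α i : ℝ) * r / d = r := by
  rw [← Finset.sum_div, ← Finset.sum_mul]
  have hsum : ∑ i ∈ s, (α i : ℝ) = d := by exact_mod_cast hαd
  rw [hsum, mul_div_cancel_left₀ _ (Nat.cast_ne_zero.mpr hd)]

end Real

theorem stmt18_general {n : ℕ} (d : ℕ) (hd2 : 2 ≤ d)
    (α : Fin n → ℕ) (hαd : ∑ i, α i = d)
    (c : ℝ) (hc : c ≠ 0) :
    (∀ z : Fin n → ℝ, (∀ i, 0 < z i) →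
      (|c| / (d : ℝ)) ^ d * ∏ i, ((α i : ℝ) / z i) ^ (α i) = 1 →
      |c| ≤ ∑ i, z i) ∧
    ((|c| / (d : ℝ)) ^ d *
        ∏ i, ((α i : ℝ) / ((α i : ℝ) * |c| / (d : ℝ))) ^ (α i) = 1) ∧
    (∑ i, ((α i : ℝ) * |c| / (d : ℝ))) = |c| :=
  ⟨fun _ hz h => Real.le_sum_of_div_pow_mul_prod_div_pow_eq_one _ hαd (by omega) (abs_nonneg c)
      (fun i _ => (hz i).le) h,
    Real.div_pow_mul_prod_div_proportional_pow_eq_one _ hαd (abs_ne_zero.mpr hc),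
    Real.sum_proportional_eq _ hαd (by omega) _⟩

/-- Lemma (2): for `α` with all `αᵢ > 0` and `|α| = d`, the minimum of `∑ zᵢ` over
`z ∈ (0,∞)ⁿ` subject to `(|c|/d)^d ∏ (αᵢ/zᵢ)^{αᵢ} = 1` is `|c|`,
attained at `zᵢ = αᵢ|c|/d`. -/
theorem stmt18 {n : ℕ} (d : ℕ) (hd2 : 2 ≤ d) (hde : Even d)
    (α : Fin n → ℕ) (hα : ∀ i, 0 < α i) (hαd : ∑ i, α i = d)
    (c : ℝ) (hc : c ≠ 0) :
    (∀ z : Fin n → ℝ, (∀ i, 0 < z i) →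
      (|c| / (d : ℝ)) ^ d * ∏ i, ((α i : ℝ) / z i) ^ (α i) = 1 →
      |c| ≤ ∑ i, z i) ∧
    ((|c| / (d : ℝ)) ^ d *
        ∏ i, ((α i : ℝ) / ((α i : ℝ) * |c| / (d : ℝ))) ^ (α i) = 1) ∧
    (∑ i, ((α i : ℝ) * |c| / (d : ℝ))) = |c| :=
  stmt18_general d hd2 α hαd c hc
end
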